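/- Let α ∈ [0,1) and let s, n be integers with s ≥ 1 and n ≥ ⌊5s/3⌋ + 3, and let B_1 be the real 3×3 matrix B_1 = [[αn − αs + s − 1, (1−α)(n − ⌊5s/3⌋ − 1), (1−α)(⌊2s/3⌋+1)], [(1−α)s, n + αs − ⌊5s/3⌋ − 2, 0], [(1−α)s, 0, αs]]. Then B_1 has three real eigenvalues θ_1 ≥ θ_2 ≥ θ_3, and its second largest eigenvalue satisfies θ_2 ≤ n + αs − ⌊5s/3⌋ − 2. -/

import Mathlib

open SimpleGraph

/-- The `Aα`-matrix of a finite simple graph: `Aα(G) = α·D(G) + (1-α)·A(G)`. -/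
noncomputable def aAlphaMatrix {V : Type*} [Finite V] (α : ℝ) (G : SimpleGraph V) :
    Matrix V V ℝ :=
  letI := Fintype.ofFinite V
  letI := Classical.decEq V
  letI : DecidableRel G.Adj := Classical.decRel _
  α • Matrix.diagonal (fun v => (G.degree v : ℝ)) + (1 - α) • (G.adjMatrix ℝ)

/-- The `Aα`-spectral radius: the largest eigenvalue of `Aα(G)` (the supremum of its real
spectrum; all eigenvalues of this symmetric matrix are real). -/
noncomputable def lambdaAlpha {V : Type*} [Finite V] (α : ℝ) (G : SimpleGraph V) : ℝ :=
  letI := Fintype.ofFinite V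
  letI := Classical.decEq V
  sSup (spectrum ℝ (aAlphaMatrix α G))

/-- The join `G ∨ H` of two graphs on disjoint vertex sets. -/
def graphJoin {V W : Type*} (G : SimpleGraph V) (H : SimpleGraph W) : SimpleGraph (V ⊕ W) where
  Adj x y :=
    match x, y with
    | Sum.inl a, Sum.inl b => G.Adj a b
    | Sum.inr a, Sum.inr b => H.Adj a b
    | Sum.inl _, Sum.inr _ => True
    | Sum.inr _, Sum.inl _ => True
  symm := by
    refine ⟨?_⟩
    rintro (a | a) (b | b) h
    · exact G.adj_symm h
    · trivial
    · trivial
    · exact H.adj_symm h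
  loopless := by
    refine ⟨?_⟩
    rintro (a | a) h
    · exact G.irrefl h
    · exact H.irrefl h

/-- `G` has an `H`-factor where `H` consists of the paths `P_k` for `k ∈ ks`: a spanning
subgraph all of whose connected components are paths `P_k` with `k ∈ ks`. -/
def HasPathFactor {V : Type*} (G : SimpleGraph V) (ks : Set ℕ) : Prop :=
  ∃ F : SimpleGraph V, F ≤ G ∧
    ∀ c : F.ConnectedComponent, ∃ k ∈ ks, Nonempty ((F.induce c.supp) ≃g pathGraph k)

/-- `K_1 ∨ (K_{n-2} ∪ K_1)`. -/
def specialGraph (n : ℕ) : SimpleGraph (Fin 1 ⊕ (Fin (n - 2) ⊕ Fin 1)) :=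
  graphJoin (⊤ : SimpleGraph (Fin 1))
    ((⊤ : SimpleGraph (Fin (n - 2))) ⊕g (⊤ : SimpleGraph (Fin 1)))

/-- The graph `K_s ∨ (K_{n−⌊5s/3⌋−1} ∪ (⌊2s/3⌋+1)K_1)`. -/
def bigGraph (n s : ℕ) :
    SimpleGraph (Fin s ⊕ (Fin (n - 5 * s / 3 - 1) ⊕ Fin (2 * s / 3 + 1))) :=
  graphJoin (⊤ : SimpleGraph (Fin s))
    ((⊤ : SimpleGraph (Fin (n - 5 * s / 3 - 1))) ⊕g (⊥ : SimpleGraph (Fin (2 * s / 3 + 1))))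

/-- The quotient matrix `B₁` of the `A_α`-matrix of
`K_s ∨ (K_{n−⌊5s/3⌋−1} ∪ (⌊2s/3⌋+1)K_1)` with respect to the partition of the vertex set
into the three parts `V(K_s)`, `V(K_{n−⌊5s/3⌋−1})`, `V((⌊2s/3⌋+1)K_1)`. -/
noncomputable def quotB1 (α : ℝ) (s n : ℕ) : Matrix (Fin 3) (Fin 3) ℝ :=
  !![α * n - α * s + s - 1,
      (1 - α) * ((n : ℝ) - ((5 * s / 3 : ℕ) : ℝ) - 1),
      (1 - α) * (((2 * s / 3 : ℕ) : ℝ) + 1);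
    (1 - α) * s, (n : ℝ) + α * s - ((5 * s / 3 : ℕ) : ℝ) - 2, 0;
    (1 - α) * s, 0, α * s]

/-!
`B₁` is an arrowhead matrix `!![a, b, c; d, e, 0; g, 0, f]` with `b d ≥ 0`, `c g > 0` and `f < e`.
Its characteristic polynomial `p` only depends on the products `b d` and `c g`, so it is also the
characteristic polynomial of a symmetric matrix and splits over `ℝ`. Moreover
`p(e) = -b d (e - f) ≤ 0 < c g (e - f) = p(f)`, which forces the middle root below `e`.
-/

theorem le_of_cubic_nonpos_of_pos {θ₁ θ₂ θ₃ e f : ℝ} (h₁₂ : θ₂ ≤ θ₁)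
    (hfe : f ≤ e) (he : (e - θ₁) * (e - θ₂) * (e - θ₃) ≤ 0)
    (hf : 0 < (f - θ₁) * (f - θ₂) * (f - θ₃)) : θ₂ ≤ e := by
  by_contra! h
  have h₃ : e ≤ θ₃ := by
    by_contra! h₃
    have : 0 < (e - θ₁) * (e - θ₂) := mul_pos_of_neg_of_neg (by linarith) (by linarith)
    nlinarith
  have : 0 < (f - θ₁) * (f - θ₂) := mul_pos_of_neg_of_neg (by linarith) (by linarith)
  nlinarith

namespace Matrix

open Polynomial

theorem charpoly_arrowhead {R : Type*} [CommRing R] (a b c d e f g : R) :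
    (!![a, b, c; d, e, 0; g, 0, f]).charpoly =
      (X - C a) * (X - C e) * (X - C f) - C (b * d) * (X - C f) - C (c * g) * (X - C e) := by
  rw [charpoly, det_fin_three]
  simp
  ring

theorem IsHermitian.exists_sorted_charpoly_eq_fin_three {S : Matrix (Fin 3) (Fin 3) ℝ}
    (hS : S.IsHermitian) :
    ∃ θ₁ θ₂ θ₃ : ℝ, θ₂ ≤ θ₁ ∧ θ₃ ≤ θ₂ ∧
      S.charpoly = (X - C θ₁) * (X - C θ₂) * (X - C θ₃) := by
  have hanti := hS.eigenvalues₀_antitone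
  refine ⟨hS.eigenvalues₀ 0, hS.eigenvalues₀ 1, hS.eigenvalues₀ 2, hanti (by decide),
    hanti (by decide), ?_⟩
  rw [hS.charpoly_eq]
  exact (Equiv.prod_comp _ fun j => X - C (hS.eigenvalues₀ j)).trans (Fin.prod_univ_three _)

theorem exists_sorted_charpoly_arrowhead_eq {a b c d e f g : ℝ}
    (hbd : 0 ≤ b * d) (hcg : 0 ≤ c * g) :
    ∃ θ₁ θ₂ θ₃ : ℝ, θ₂ ≤ θ₁ ∧ θ₃ ≤ θ₂ ∧
      (!![a, b, c; d, e, 0; g, 0, f]).charpoly = (X - C θ₁) * (X - C θ₂) * (X - C θ₃) := by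
  set p := √(b * d)
  set q := √(c * g)
  have hS : (!![a, p, q; p, e, 0; q, 0, f]).IsHermitian := by
    ext i j
    fin_cases i <;> fin_cases j <;> simp
  rw [charpoly_arrowhead, ← Real.mul_self_sqrt hbd, ← Real.mul_self_sqrt hcg,
    ← charpoly_arrowhead]
  exact hS.exists_sorted_charpoly_eq_fin_three

theorem arrowhead_second_eigenvalue_le {a b c d e f g : ℝ}
    (hbd : 0 ≤ b * d) (hcg : 0 < c * g) (hfe : f < e) :
    ∃ θ₁ θ₂ θ₃ : ℝ, θ₂ ≤ θ₁ ∧ θ₃ ≤ θ₂ ∧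
      (!![a, b, c; d, e, 0; g, 0, f]).charpoly = (X - C θ₁) * (X - C θ₂) * (X - C θ₃) ∧
      θ₂ ≤ e := by
  obtain ⟨θ₁, θ₂, θ₃, h₁₂, h₂₃, hchar⟩ := exists_sorted_charpoly_arrowhead_eq (a := a) hbd hcg.le
  have heval (t : ℝ) : (t - θ₁) * (t - θ₂) * (t - θ₃) =
      (t - a) * (t - e) * (t - f) - b * d * (t - f) - c * g * (t - e) := by
    simpa using congrArg (eval t) (hchar.symm.trans (charpoly_arrowhead a b c d e f g))
  refine ⟨θ₁, θ₂, θ₃, h₁₂, h₂₃, hchar, le_of_cubic_nonpos_of_pos (θ₃ := θ₃) h₁₂ hfe.le ?_ ?_⟩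
  · rw [heval]
    nlinarith [mul_nonneg hbd (sub_nonneg.2 hfe.le)]
  · rw [heval]
    nlinarith [mul_pos hcg (sub_pos.2 hfe)]

end Matrix

open Polynomial in
theorem quotB1_second_eigenvalue_le_general (α : ℝ) (hα1 : α < 1)
    (s n : ℕ) (hs : 1 ≤ s) (hn : 5 * s / 3 + 3 ≤ n) :
    ∃ θ₁ θ₂ θ₃ : ℝ, θ₂ ≤ θ₁ ∧ θ₃ ≤ θ₂ ∧
      (quotB1 α s n).charpoly = (X - C θ₁) * (X - C θ₂) * (X - C θ₃) ∧
      θ₂ ≤ (n : ℝ) + α * s - ((5 * s / 3 : ℕ) : ℝ) - 2 := by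
  have hα : 0 < 1 - α := sub_pos.2 hα1
  have hs' : (0 : ℝ) < s := by exact_mod_cast hs
  have hn' : ((5 * s / 3 : ℕ) : ℝ) + 3 ≤ n := by exact_mod_cast hn
  refine Matrix.arrowhead_second_eigenvalue_le ?_ ?_ (by linarith)
  · have : (0 : ℝ) ≤ n - ((5 * s / 3 : ℕ) : ℝ) - 1 := by linarith
    positivity
  · positivity

open Polynomial in
/-- For `α ∈ [0,1)` and integers `s ≥ 1`, `n ≥ ⌊5s/3⌋ + 3`, the quotient matrix `B₁` has
three real eigenvalues `θ₁ ≥ θ₂ ≥ θ₃` (its characteristic polynomial splits over `ℝ` with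
these roots), and the second largest one satisfies `θ₂ ≤ n + αs − ⌊5s/3⌋ − 2`. -/
theorem quotB1_second_eigenvalue_le (α : ℝ) (hα0 : 0 ≤ α) (hα1 : α < 1)
    (s n : ℕ) (hs : 1 ≤ s) (hn : 5 * s / 3 + 3 ≤ n) :
    ∃ θ₁ θ₂ θ₃ : ℝ, θ₂ ≤ θ₁ ∧ θ₃ ≤ θ₂ ∧
      (quotB1 α s n).charpoly = (X - C θ₁) * (X - C θ₂) * (X - C θ₃) ∧
      θ₂ ≤ (n : ℝ) + α * s - ((5 * s / 3 : ℕ) : ℝ) - 2 :=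
  quotB1_second_eigenvalue_le_general α hα1 s n hs hn
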